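/- arXiv:2502.16011 — 2 statements merged into one kernel-verified Lean document; each statement's English description precedes it below -/
import Mathlib

section
/- Lefschetz zeta function of a permutative squared-by-blocks map on a wedge sum (main theorem, part (b)): in the permutative algebraic model, with M := lcm(s₁,…,s_q), the identity ((1 − t)·ζ_f(t))^M = ∏_{j=1}^q ( ∏_{i∈Λ_j} (1 − t^{s_j}) · ζ_{f_ii^{s_j}}(t^{s_j}) )^{M/s_j} holds in the ring ℚ[[t]] of formal power series (this is the paper's formula ζ_f(t) = (1−t)^{−1} ∏_{j=1}^q (∏_{i∈Λ_j} (1−t^{s_j}) ζ_{f_ii^{s_j}}(t^{s_j}))^{1/s_j}, with both sides raised to the power M to avoid fractional exponents). -/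
/-- The exponential `exp(f) = ∑_{j ≥ 0} f^j / j!` of a formal power series `f ∈ ℚ[[t]]`
(intended for series with zero constant term). -/
noncomputable def expPS (f : PowerSeries ℚ) : PowerSeries ℚ :=
  PowerSeries.mk fun n =>
    PowerSeries.coeff n (∑ j ∈ Finset.range (n + 1), (j.factorial : ℚ)⁻¹ • f ^ j)

/-- The Lefschetz zeta function `ζ(t) = exp(∑_{m ≥ 1} L(m)·t^m/m) ∈ ℚ[[t]]` of a sequence of
Lefschetz numbers `L : ℕ → ℚ`. -/
noncomputable def lefschetzZeta (L : ℕ → ℚ) : PowerSeries ℚ :=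
  expPS (PowerSeries.mk fun m => if m = 0 then 0 else L m / (m : ℚ))

/-- Substitution of `t^d` for `t` in a formal power series `g(t) ∈ ℚ[[t]]`: the series
`g(t^d)`. -/
noncomputable def substPow (d : ℕ) (g : PowerSeries ℚ) : PowerSeries ℚ :=
  PowerSeries.mk fun n => if d ∣ n then PowerSeries.coeff (n / d) g else 0

/-!
The map `L ↦ ζ_L = exp(∑_{m ≥ 1} L(m) tᵐ/m)` turns sums of sequences into products of power
series (`ζ_{L₁+L₂}` and `ζ_{L₁} ζ_{L₂}` both solve `y' = y g'`, `y(0) = 1`, for the same `g`, and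
`y exp(-g)` then has derivative `0`), sends the constant sequence `-1` to `1 - t`, and
substituting `t^d` turns `ζ_L` into `ζ` of the sequence `n ↦ d · L(n/d)` supported on the
multiples of `d`. So both sides of the identity are `ζ` of explicit sequences, and it remains to
compare those: `M (L(n) - 1) = ∑_j (M/s_j) ∑_{i ∈ Λ_j} [s_j ∣ n] s_j (Lc_i(n) - 1)`.
This holds because `tr F_k^n = ∑_i tr(π_i F_k^n ι_i)`, where the block `π_i F_k^n ι_i` vanishes
unless `σ^n` fixes `i`, that is, unless the length of the orbit of `i` divides `n`.
-/

open PowerSeries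

section ExpSubst

variable {f g : ℚ⟦X⟧}

lemma expPS_eq_exp_subst (hf : constantCoeff f = 0) : expPS f = (exp ℚ).subst f := by
  ext n
  have hvanish : ∀ j, n < j → coeff n (f ^ j) = 0 := fun j hj =>
    X_pow_dvd_iff.mp (pow_dvd_pow_of_dvd (X_dvd_iff.mpr hf) j) n hj
  rw [expPS, coeff_mk, coeff_subst' (HasSubst.of_constantCoeff_zero' hf),
    finsum_eq_sum_of_support_subset _ (s := Finset.range (n + 1)), map_sum]
  · refine Finset.sum_congr rfl fun j _ => ?_
    rw [coeff_exp, map_smul, smul_eq_mul, smul_eq_mul, Algebra.algebraMap_self, RingHom.id_apply,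
      one_div]
  · intro j hj
    rw [Function.mem_support] at hj
    rw [Finset.coe_range, Set.mem_Iio]
    by_contra h
    exact hj (by rw [hvanish j (by omega), smul_zero])

lemma constantCoeff_exp_subst (hf : constantCoeff f = 0) :
    constantCoeff ((exp ℚ).subst f) = 1 := by
  rw [← expPS_eq_exp_subst hf, ← coeff_zero_eq_constantCoeff_apply, expPS, coeff_mk]
  simp

lemma derivative_exp_subst (hf : constantCoeff f = 0) :
    d⁄dX ℚ ((exp ℚ).subst f) = (exp ℚ).subst f * d⁄dX ℚ f := by
  rw [derivative_subst (HasSubst.of_constantCoeff_zero' hf), derivative_exp]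

lemma mul_exp_subst_neg_eq_one (hf : constantCoeff f = 0) {y : ℚ⟦X⟧}
    (hy : d⁄dX ℚ y = y * d⁄dX ℚ f) (hy0 : constantCoeff y = 1) :
    y * (exp ℚ).subst (-f) = 1 := by
  have hnf : constantCoeff (-f) = 0 := by rw [map_neg, hf, neg_zero]
  refine derivative.ext ?_ (by rw [map_mul, hy0, constantCoeff_exp_subst hnf, map_one, one_mul])
  rw [Derivation.leibniz, derivative_exp_subst hnf, hy, derivative_one, map_neg, smul_eq_mul,
    smul_eq_mul]
  ring

lemma eq_exp_subst_of_derivative_eq (hf : constantCoeff f = 0) {y : ℚ⟦X⟧}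
    (hy : d⁄dX ℚ y = y * d⁄dX ℚ f) (hy0 : constantCoeff y = 1) :
    y = (exp ℚ).subst f :=
  calc y = y * ((exp ℚ).subst f * (exp ℚ).subst (-f)) := by
        rw [mul_exp_subst_neg_eq_one hf (derivative_exp_subst hf) (constantCoeff_exp_subst hf),
          mul_one]
    _ = (exp ℚ).subst f := by rw [mul_left_comm, mul_exp_subst_neg_eq_one hf hy hy0, mul_one]

lemma exp_subst_add (hf : constantCoeff f = 0) (hg : constantCoeff g = 0) :
    (exp ℚ).subst (f + g) = (exp ℚ).subst f * (exp ℚ).subst g := by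
  refine (eq_exp_subst_of_derivative_eq (by rw [map_add, hf, hg, add_zero]) ?_ ?_).symm
  · rw [Derivation.leibniz, derivative_exp_subst hf, derivative_exp_subst hg, map_add,
      smul_eq_mul, smul_eq_mul]
    ring
  · rw [map_mul, constantCoeff_exp_subst hf, constantCoeff_exp_subst hg, one_mul]

lemma expand_exp_subst {d : ℕ} (hd : d ≠ 0) (hf : constantCoeff f = 0) :
    expand d hd ((exp ℚ).subst f) = (exp ℚ).subst (expand d hd f) := by
  rw [expand_apply, expand_apply, subst_comp_subst_apply (HasSubst.of_constantCoeff_zero' hf)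
    (HasSubst.X_pow hd)]

end ExpSubst

def lefschetzLog : (ℕ → ℚ) →ₗ[ℚ] ℚ⟦X⟧ where
  toFun L := mk fun m => if m = 0 then 0 else L m / m
  map_add' L₁ L₂ := by ext m; simp only [coeff_mk, Pi.add_apply, map_add]; split_ifs <;> ring
  map_smul' c L := by
    ext m; simp only [coeff_mk, Pi.smul_apply, map_smul, smul_eq_mul, RingHom.id_apply]
    split_ifs <;> ring

lemma coeff_lefschetzLog (L : ℕ → ℚ) (m : ℕ) :
    coeff m (lefschetzLog L) = if m = 0 then 0 else L m / m :=
  coeff_mk m fun m => if m = 0 then 0 else L m / m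

lemma constantCoeff_lefschetzLog (L : ℕ → ℚ) : constantCoeff (lefschetzLog L) = 0 := by
  rw [← coeff_zero_eq_constantCoeff_apply, coeff_lefschetzLog, if_pos rfl]

lemma lefschetzZeta_eq_exp_subst (L : ℕ → ℚ) :
    lefschetzZeta L = (exp ℚ).subst (lefschetzLog L) :=
  expPS_eq_exp_subst (constantCoeff_lefschetzLog L)

lemma lefschetzZeta_add (L₁ L₂ : ℕ → ℚ) :
    lefschetzZeta (L₁ + L₂) = lefschetzZeta L₁ * lefschetzZeta L₂ := by
  simp only [lefschetzZeta_eq_exp_subst, map_add]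
  exact exp_subst_add (constantCoeff_lefschetzLog L₁) (constantCoeff_lefschetzLog L₂)

lemma lefschetzZeta_zero : lefschetzZeta 0 = 1 := by
  rw [lefschetzZeta_eq_exp_subst, map_zero]
  exact (eq_exp_subst_of_derivative_eq (map_zero _) (by simp) (map_one _)).symm

lemma lefschetzZeta_sum {ι : Type*} (t : Finset ι) (L : ι → ℕ → ℚ) :
    lefschetzZeta (∑ i ∈ t, L i) = ∏ i ∈ t, lefschetzZeta (L i) := by
  induction t using Finset.cons_induction with
  | empty => rw [Finset.sum_empty, Finset.prod_empty, lefschetzZeta_zero]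
  | cons a t ha ih => rw [Finset.sum_cons, Finset.prod_cons, lefschetzZeta_add, ih]

lemma lefschetzZeta_nsmul (n : ℕ) (L : ℕ → ℚ) :
    lefschetzZeta (n • L) = lefschetzZeta L ^ n := by
  simpa using lefschetzZeta_sum (Finset.range n) fun _ => L

lemma lefschetzZeta_neg_one : lefschetzZeta (-1) = 1 - X := by
  have hlog : d⁄dX ℚ (lefschetzLog (-1)) = -mk 1 := by
    ext n
    rw [coeff_derivative, coeff_lefschetzLog, if_neg n.succ_ne_zero, map_neg, coeff_mk]
    simp only [Pi.neg_apply, Pi.one_apply]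
    push_cast
    field_simp
  rw [lefschetzZeta_eq_exp_subst]
  refine (eq_exp_subst_of_derivative_eq (constantCoeff_lefschetzLog _) ?_ (by simp)).symm
  rw [hlog, mul_neg, mul_comm, mk_one_mul_one_sub_eq_one, map_sub, derivative_one, derivative_X,
    zero_sub]

lemma one_sub_X_mul_lefschetzZeta (L : ℕ → ℚ) :
    (1 - X) * lefschetzZeta L = lefschetzZeta (L - 1) := by
  rw [sub_eq_add_neg L, lefschetzZeta_add, lefschetzZeta_neg_one, mul_comm]

lemma expand_lefschetzZeta {d : ℕ} (hd : d ≠ 0) (L : ℕ → ℚ) :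
    expand d hd (lefschetzZeta L) =
      lefschetzZeta fun n => if d ∣ n then d * L (n / d) else 0 := by
  rw [lefschetzZeta_eq_exp_subst, lefschetzZeta_eq_exp_subst,
    expand_exp_subst hd (constantCoeff_lefschetzLog L)]
  congr 1
  ext n
  rw [coeff_expand, coeff_lefschetzLog, coeff_lefschetzLog]
  by_cases h : d ∣ n
  · obtain ⟨m, rfl⟩ := h
    rw [if_pos (dvd_mul_right d m), Nat.mul_div_cancel_left m (Nat.pos_of_ne_zero hd),
      if_pos (dvd_mul_right d m)]
    rcases eq_or_ne m 0 with rfl | hm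
    · simp
    · rw [if_neg hm, if_neg (mul_ne_zero hd hm)]
      push_cast
      field_simp
  · simp [h]

lemma substPow_eq_expand {d : ℕ} (hd : d ≠ 0) (g : ℚ⟦X⟧) : substPow d g = expand d hd g := by
  ext n
  rw [substPow, coeff_mk, coeff_expand]

lemma one_sub_X_pow_mul_substPow_lefschetzZeta {d : ℕ} (hd : d ≠ 0) (L : ℕ → ℚ) :
    (1 - X ^ d) * substPow d (lefschetzZeta fun m => L (d * m)) =
      lefschetzZeta fun n => if d ∣ n then d * (L n - 1) else 0 := by
  rw [substPow_eq_expand hd, ← expand_X d hd, ← map_one (expand d hd), ← map_sub, ← map_mul,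
    one_sub_X_mul_lefschetzZeta, expand_lefschetzZeta]
  congr 1
  ext n
  split_ifs with h
  · rw [Pi.sub_apply, Nat.mul_div_cancel' h, Pi.one_apply]
  · rfl

open LinearMap in
theorem LinearMap.trace_eq_sum_trace_proj_comp_comp_single {R ι : Type*} [CommRing R]
    [Fintype ι] [DecidableEq ι] (W : ι → Type*) [∀ i, AddCommGroup (W i)] [∀ i, Module R (W i)]
    [∀ i, Module.Free R (W i)] [∀ i, Module.Finite R (W i)] (G : Module.End R (Π i, W i)) :
    trace R _ G = ∑ i, trace R (W i) (proj i ∘ₗ G ∘ₗ single R W i) := by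
  calc trace R _ G = trace R _ (lsum R W R fun i => G ∘ₗ single R W i) :=
        congrArg _ ((lsum R W R).apply_symm_apply G).symm
    _ = _ := by
        rw [lsum_apply, map_sum]
        exact Finset.sum_congr rfl fun i _ => trace_comp_comm' _ _

section BlockPermutation

variable {R ι : Type*} [Semiring R] [DecidableEq ι] {W : ι → Type*}
  [∀ i, AddCommMonoid (W i)] [∀ i, Module R (W i)] (σ : Equiv.Perm ι) {G : Module.End R (Π i, W i)}

theorem pow_apply_single_apply_eq_zero
    (hG : ∀ i (v : W i), ∃ w : W (σ i), G (Pi.single i v) = Pi.single (σ i) w)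
    (n : ℕ) (i : ι) (v : W i) {j : ι} (hj : j ≠ (σ ^ n) i) :
    (G ^ n) (Pi.single i v) j = 0 := by
  induction n generalizing i v with
  | zero => exact Pi.single_eq_of_ne hj v
  | succ n ih =>
    obtain ⟨w, hw⟩ := hG i v
    rw [pow_succ, Module.End.mul_apply, hw]
    exact ih (σ i) w (by rwa [pow_succ, Equiv.Perm.mul_apply] at hj)

theorem proj_comp_pow_comp_single_eq_zero
    (hG : ∀ i (v : W i), ∃ w : W (σ i), G (Pi.single i v) = Pi.single (σ i) w)
    {n : ℕ} {i : ι} (hn : (σ ^ n) i ≠ i) :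
    LinearMap.proj i ∘ₗ (G ^ n) ∘ₗ LinearMap.single R W i = 0 :=
  LinearMap.ext fun v => pow_apply_single_apply_eq_zero σ hG n i v hn.symm

end BlockPermutation

theorem trace_pow_eq_sum_fixedPoints {R ι : Type*} [CommRing R] [Fintype ι]
    [DecidableEq ι] {W : ι → Type*} [∀ i, AddCommGroup (W i)] [∀ i, Module R (W i)]
    [∀ i, Module.Free R (W i)] [∀ i, Module.Finite R (W i)] (σ : Equiv.Perm ι)
    {G : Module.End R (Π i, W i)}
    (hG : ∀ i (v : W i), ∃ w : W (σ i), G (Pi.single i v) = Pi.single (σ i) w) (n : ℕ) :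
    LinearMap.trace R _ (G ^ n) = ∑ i with (σ ^ n) i = i,
      LinearMap.trace R (W i) (LinearMap.proj i ∘ₗ (G ^ n) ∘ₗ LinearMap.single R W i) := by
  rw [LinearMap.trace_eq_sum_trace_proj_comp_comp_single, Finset.sum_filter]
  refine Finset.sum_congr rfl fun i _ => ?_
  split_ifs with h
  · rfl
  · rw [proj_comp_pow_comp_single_eq_zero σ hG h, map_zero]

theorem Equiv.Perm.pow_apply_eq_self_iff_card_dvd {α : Type*} [Finite α] [DecidableEq α]
    (σ : Equiv.Perm α) {x : α} {O : Finset α} (hO : ∀ y, y ∈ O ↔ ∃ m : ℕ, (σ ^ m) x = y)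
    (n : ℕ) : (σ ^ n) x = x ↔ O.card ∣ n := by
  have hx : x ∈ Function.periodicPts σ := σ.injective.mem_periodicPts x
  have hcard : O.card = Function.minimalPeriod σ x := by
    have hO' :
        O = ((List.range (Function.minimalPeriod σ x)).map fun m => σ^[m] x).toFinset := by
      ext y
      rw [hO, List.mem_toFinset, ← Cycle.mem_coe_iff, ← Function.periodicOrbit_def,
        Function.mem_periodicOrbit_iff hx]
      simp only [Equiv.Perm.iterate_eq_pow]
    rw [hO', List.toFinset_card_of_nodup Function.nodup_periodicOrbit, List.length_map,
      List.length_range]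
  rw [hcard, ← Function.isPeriodicPt_iff_minimalPeriod_dvd, Function.IsPeriodicPt,
    Function.IsFixedPt, Equiv.Perm.iterate_eq_pow]

theorem Equiv.Perm.sum_filter_pow_apply_eq_self {α β M : Type*} [Fintype α] [DecidableEq α]
    [Fintype β] [AddCommMonoid M] (σ : Equiv.Perm α) (Λ : β → Finset α)
    (hΛorb : ∀ j, ∀ i ∈ Λ j, ∀ i', i' ∈ Λ j ↔ ∃ m : ℕ, (σ ^ m) i = i')
    (hΛcover : ∀ i, ∃ j, i ∈ Λ j) (hΛdisj : ∀ j j', j ≠ j' → _root_.Disjoint (Λ j) (Λ j'))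
    (x : α → M) (n : ℕ) :
    ∑ i with (σ ^ n) i = i, x i = ∑ j, ∑ i ∈ Λ j, if (Λ j).card ∣ n then x i else 0 := by
  have huniv : Finset.univ.biUnion Λ = Finset.univ :=
    Finset.eq_univ_of_forall fun i => by simpa using hΛcover i
  rw [Finset.sum_filter, ← huniv, Finset.sum_biUnion fun j _ j' _ h => hΛdisj j j' h]
  refine Finset.sum_congr rfl fun j _ => Finset.sum_congr rfl fun i hi => ?_
  exact if_congr (σ.pow_apply_eq_self_iff_card_dvd (hΛorb j i hi) n) rfl rfl

theorem stmt9_general (s N q : ℕ)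
    (σ : Equiv.Perm (Fin s))
    (Λ : Fin q → Finset (Fin s))
    (hΛorb : ∀ j, ∀ i ∈ Λ j, ∀ i', i' ∈ Λ j ↔ ∃ m : ℕ, (σ ^ m) i = i')
    (hΛne : ∀ j, (Λ j).Nonempty)
    (hΛcover : ∀ i, ∃ j, i ∈ Λ j)
    (hΛdisj : ∀ j j', j ≠ j' → Disjoint (Λ j) (Λ j'))
    (sVec : Fin q → ℕ) (hsVec : ∀ j, sVec j = (Λ j).card)
    (M : ℕ) (hM : M = Finset.univ.lcm sVec)
    (V : Fin s → Fin N → Type*)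
    [∀ i k, AddCommGroup (V i k)] [∀ i k, Module ℚ (V i k)]
    [∀ i k, FiniteDimensional ℚ (V i k)]
    (A : ∀ i k, V i k →ₗ[ℚ] V (σ i) k)
    (F : ∀ k, (Π i, V i k) →ₗ[ℚ] (Π i, V i k))
    (hF : ∀ k (i : Fin s) (v : V i k), F k (Pi.single i v) = Pi.single (σ i) (A i k v))
    (L : ℕ → ℚ)
    (hL : ∀ m, L m =
      1 + ∑ k : Fin N, (-1 : ℚ) ^ ((k : ℕ) + 1) *
        LinearMap.trace ℚ (Π i, V i k) ((F k) ^ m))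
    (Lc : Fin s → ℕ → ℚ)
    (hLc : ∀ i m, Lc i m =
      1 + ∑ k : Fin N, (-1 : ℚ) ^ ((k : ℕ) + 1) *
        LinearMap.trace ℚ (V i k)
          ((LinearMap.proj i) ∘ₗ ((F k) ^ m) ∘ₗ (LinearMap.single ℚ (fun j => V j k) i))) :
    ((1 - PowerSeries.X) * lefschetzZeta L) ^ M =
      ∏ j : Fin q,
        (∏ i ∈ Λ j, (1 - PowerSeries.X ^ (sVec j)) *
          substPow (sVec j) (lefschetzZeta (fun m => Lc i (sVec j * m)))) ^ (M / sVec j) := by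
  have hpos : ∀ j, sVec j ≠ 0 := fun j => by rw [hsVec]; exact (hΛne j).card_pos.ne'
  have hcore : ∀ n, L n - 1 = ∑ j, ∑ i ∈ Λ j, if sVec j ∣ n then Lc i n - 1 else 0 := by
    intro n
    simp_rw [hsVec, ← Equiv.Perm.sum_filter_pow_apply_eq_self σ Λ hΛorb hΛcover hΛdisj, hL,
      hLc, add_sub_cancel_left, trace_pow_eq_sum_fixedPoints σ (fun i v => ⟨A i _ v, hF _ i v⟩),
      Finset.mul_sum]
    exact Finset.sum_comm
  rw [one_sub_X_mul_lefschetzZeta, ← lefschetzZeta_nsmul, Finset.prod_congr rfl fun j _ => by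
    rw [Finset.prod_congr rfl fun i _ =>
      one_sub_X_pow_mul_substPow_lefschetzZeta (hpos j) (Lc i), ← lefschetzZeta_sum,
      ← lefschetzZeta_nsmul], ← lefschetzZeta_sum]
  congr 1
  ext n
  rw [Pi.smul_apply, Pi.sub_apply, Pi.one_apply, hcore n, nsmul_eq_mul, Finset.sum_apply,
    Finset.mul_sum]
  refine Finset.sum_congr rfl fun j _ => ?_
  rw [Pi.smul_apply, Finset.sum_apply, nsmul_eq_mul, Finset.mul_sum, Finset.mul_sum]
  refine Finset.sum_congr rfl fun i _ => ?_
  have hquot : ((M / sVec j : ℕ) : ℚ) * sVec j = M := by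
    exact_mod_cast Nat.div_mul_cancel (hM ▸ Finset.dvd_lcm (Finset.mem_univ j))
  split_ifs
  · rw [← hquot, mul_assoc]
  · rw [mul_zero, mul_zero]

/-- **Lefschetz zeta function of a permutative squared-by-blocks map on a wedge sum (main
theorem, part (b)).**  In the permutative algebraic model (`σ` a permutation of `{1,…,s}`
with orbits `Λ 1, …, Λ q` of cardinalities `s₁, …, s_q`; `F k` the block-permutation
endomorphism of `⊕_i V i k` built from the maps `A i k : V i k → V (σ i) k`), with
`L m = 1 + ∑_{k=1}^N (-1)^k tr(F_k^m)`,
`Lc i m = 1 + ∑_{k=1}^N (-1)^k tr(π_{i,k} ∘ F_k^m ∘ ι_{i,k})`,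
`ζ_f(t) = exp(∑_{m≥1} L(f^m) t^m/m)`, and `M = lcm(s₁,…,s_q)`, the identity
`((1 − t)·ζ_f(t))^M = ∏_{j=1}^q (∏_{i∈Λ_j} (1 − t^{s_j})·ζ_{f_ii^{s_j}}(t^{s_j}))^{M/s_j}`
holds in `ℚ[[t]]`, where `ζ_{f_ii^{s_j}}(t^{s_j})` is `exp(∑_{m≥1} L(f_ii^{s_j m}) t^m/m)`
with `t^{s_j}` substituted for `t`. -/
theorem stmt9 (s N q : ℕ) (hs : 1 ≤ s) (hN : 1 ≤ N)
    (σ : Equiv.Perm (Fin s))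
    (Λ : Fin q → Finset (Fin s))
    (hΛorb : ∀ j, ∀ i ∈ Λ j, ∀ i', i' ∈ Λ j ↔ ∃ m : ℕ, (σ ^ m) i = i')
    (hΛne : ∀ j, (Λ j).Nonempty)
    (hΛcover : ∀ i, ∃ j, i ∈ Λ j)
    (hΛdisj : ∀ j j', j ≠ j' → Disjoint (Λ j) (Λ j'))
    (sVec : Fin q → ℕ) (hsVec : ∀ j, sVec j = (Λ j).card)
    (M : ℕ) (hM : M = Finset.univ.lcm sVec)
    (V : Fin s → Fin N → Type*)
    [∀ i k, AddCommGroup (V i k)] [∀ i k, Module ℚ (V i k)]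
    [∀ i k, FiniteDimensional ℚ (V i k)]
    (hdim : ∀ (k : Fin N) (i i' : Fin s), (∃ m : ℕ, (σ ^ m) i = i') →
      Module.finrank ℚ (V i k) = Module.finrank ℚ (V i' k))
    (A : ∀ i k, V i k →ₗ[ℚ] V (σ i) k)
    (F : ∀ k, (Π i, V i k) →ₗ[ℚ] (Π i, V i k))
    (hF : ∀ k (i : Fin s) (v : V i k), F k (Pi.single i v) = Pi.single (σ i) (A i k v))
    (L : ℕ → ℚ)
    (hL : ∀ m, L m =
      1 + ∑ k : Fin N, (-1 : ℚ) ^ ((k : ℕ) + 1) *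
        LinearMap.trace ℚ (Π i, V i k) ((F k) ^ m))
    (Lc : Fin s → ℕ → ℚ)
    (hLc : ∀ i m, Lc i m =
      1 + ∑ k : Fin N, (-1 : ℚ) ^ ((k : ℕ) + 1) *
        LinearMap.trace ℚ (V i k)
          ((LinearMap.proj i) ∘ₗ ((F k) ^ m) ∘ₗ (LinearMap.single ℚ (fun j => V j k) i))) :
    ((1 - PowerSeries.X) * lefschetzZeta L) ^ M =
      ∏ j : Fin q,
        (∏ i ∈ Λ j, (1 - PowerSeries.X ^ (sVec j)) *
          substPow (sVec j) (lefschetzZeta (fun m => Lc i (sVec j * m)))) ^ (M / sVec j) :=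
  stmt9_general s N q σ Λ hΛorb hΛne hΛcover hΛdisj sVec hsVec M hM V A F hF L hL Lc hLc
end

section
/- Algebraic periods of a diagonal self-map of a wedge sum of tori built from maps with characteristic polynomial t^n − c: let n be an odd prime, s ≥ 1 an integer, and for each j ∈ {1,…,s} let A_j be an n×n integer matrix whose characteristic polynomial is t^n − c_j, where c_j > 2 is an integer. Define, for m ≥ 1, L(f^m) := ∑_{j=1}^s det(I_n − A_j^m) − (s − 1) and ℓ(f^m) := ∑_{r∣m} μ(m/r)·L(f^r), where μ is the Möbius function. Then ℓ(f^m) ≠ 0 for every m ≥ 1, i.e. the set of algebraic periods APer_L(f) := {m ≥ 1 : ℓ(f^m) ≠ 0} equals the set of all positive integers. -/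
/-!
If `A` has characteristic polynomial `X ^ n - c`, Cayley–Hamilton gives `A ^ n = c`, so
`det (1 - A ^ m) = (1 - c ^ (m / n)) ^ n` when `n ∣ m`. When `m` is coprime to `n`, factor
`X ^ m - 1 = ∏ (X - ζ ^ k)` over the `m`-th roots of unity in `ℂ`: each factor gives
`det (A - ζ ^ k) = ± ((ζ ^ n) ^ k - c)`, and as `ζ ^ n` is again a primitive `m`-th root the
product is `± (c ^ m - 1)`, whence `det (1 - A ^ m) = 1 - c ^ m`.

For an odd prime `n` these two cases are exhaustive, and `-det (1 - A ^ m)` exceeds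
`c ^ (m / 2 + 1) / 2`. In the Möbius sum the term `r = m` therefore outweighs all proper
divisors `r ≤ m / 2`, since `2 ∑_{r ≤ m/2} c ^ r < c ^ (m / 2 + 1)` for `c ≥ 3`. So every torus
has negative Dold coefficients, and the constant `-(s - 1)` only adds `-(s - 1)` at `m = 1`.
-/

open Polynomial Matrix Finset
open scoped ArithmeticFunction.Moebius

lemma odd_add_succ_mul_of_coprime {m n : ℕ} (h : m.Coprime n) : Odd (n + (n + 1) * m) := by
  rcases Nat.even_or_odd n with hn | hn
  · have hm : Odd m := (h.symm.coprime_dvd_left (even_iff_two_dvd.mp hn)).odd_of_left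
    exact hn.add_odd (hn.add_one.mul hm)
  · exact hn.add_even ((hn.add_one).mul_right m)

lemma lt_two_mul_sub_one_pow {y : ℤ} (hy : 3 ≤ y) {n : ℕ} (hn : Odd n) :
    y ^ ((n + 1) / 2) < 2 * (y - 1) ^ n := by
  obtain ⟨j, rfl⟩ := hn
  have hsq : y ≤ (y - 1) ^ 2 := by nlinarith
  calc y ^ ((2 * j + 1 + 1) / 2) = y ^ j * y := by rw [← pow_succ]; congr 1; omega
    _ ≤ ((y - 1) ^ 2) ^ j * y := by gcongr
    _ < ((y - 1) ^ 2) ^ j * (2 * (y - 1)) := by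
      gcongr
      · exact pow_pos (by nlinarith) j
      · omega
    _ = 2 * (y - 1) ^ (2 * j + 1) := by rw [← pow_mul]; ring

lemma mul_div_two_lt_of_odd {n k : ℕ} (hn : Odd n) (hk : 0 < k) :
    n * k / 2 < k * ((n + 1) / 2) := by
  obtain ⟨j, rfl⟩ := hn
  rw [show (2 * j + 1) * k = 2 * (j * k) + k by ring, show (2 * j + 1 + 1) / 2 = j + 1 by omega,
    mul_add, mul_comm k j]
  omega

lemma two_mul_geom_sum_lt {c : ℤ} (hc : 3 ≤ c) (t : ℕ) : 2 * ∑ r ∈ range t, c ^ r < c ^ t := by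
  induction t with
  | zero => simp
  | succ t ih =>
    rw [sum_range_succ, pow_succ]
    nlinarith [pow_pos (by omega : (0 : ℤ) < c) t]

lemma properDivisors_subset_range (m : ℕ) : m.properDivisors ⊆ range (m / 2 + 1) := by
  intro r hr
  have h := Nat.one_lt_div_of_mem_properDivisors hr
  rw [mem_range, Nat.lt_succ_iff, Nat.le_div_iff_mul_le two_pos]
  calc r * 2 ≤ r * (m / r) := Nat.mul_le_mul_left r h
    _ ≤ m := Nat.mul_div_le m r

namespace Matrix

section

variable {R : Type*} [CommRing R] {n m : ℕ} {c : R} {B : Matrix (Fin n) (Fin n) R}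

lemma det_sub_scalar (B : Matrix (Fin n) (Fin n) R) (r : R) :
    (B - scalar (Fin n) r).det = (-1) ^ n * B.charpoly.eval r := by
  rw [eval_charpoly, ← neg_sub, det_neg, Fintype.card_fin]

lemma pow_eq_scalar_of_charpoly_eq (hB : B.charpoly = X ^ n - C c) : B ^ n = scalar (Fin n) c := by
  have := aeval_self_charpoly B
  rwa [hB, map_sub, aeval_X_pow, aeval_C, sub_eq_zero] at this

lemma det_one_sub_pow_of_dvd (hB : B.charpoly = X ^ n - C c) (h : n ∣ m) :
    (1 - B ^ m).det = (1 - c ^ (m / n)) ^ n := by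
  conv_lhs => rw [← Nat.mul_div_cancel' h, pow_mul, pow_eq_scalar_of_charpoly_eq hB,
    ← map_pow, ← map_one (scalar (Fin n)), ← map_sub]
  simp [scalar_apply, det_diagonal]

lemma det_pow_sub_one_eq_prod [IsDomain R] {ι : Type*} [Fintype ι] [DecidableEq ι] {ζ : R}
    (hζ : IsPrimitiveRoot ζ m) (hm : 0 < m) (M : Matrix ι ι R) :
    (M ^ m - 1).det = ∏ k ∈ range m, (M - scalar ι (ζ ^ k)).det := by
  let φ : R[X] →* R :=
    { toFun p := (aeval M p).det, map_one' := by simp, map_mul' _ _ := by simp [det_mul] }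
  have := congrArg φ (X_pow_sub_C_eq_prod hζ hm (one_pow m))
  simpa [φ, map_prod, algebraMap_eq_diagonal, Pi.algebraMap_def, diagonal_pow, Pi.pow_def]
    using this

lemma det_one_sub_pow_of_coprime [IsDomain R] (hB : B.charpoly = X ^ n - C c) {ζ : R}
    (hζ : IsPrimitiveRoot ζ m) (hm : 0 < m) (hmn : m.Coprime n) :
    (1 - B ^ m).det = 1 - c ^ m := by
  have hroots := congrArg (eval c) <|
    X_pow_sub_C_eq_prod (hζ.pow_of_coprime n hmn.symm) hm (one_pow m)
  simp only [eval_sub, eval_pow, eval_X, eval_C, eval_prod, mul_one] at hroots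
  calc (1 - B ^ m).det = (-1) ^ n * (B ^ m - 1).det := by
        rw [← neg_sub, det_neg, Fintype.card_fin]
    _ = (-1) ^ n * ∏ k ∈ range m, (-1) ^ (n + 1) * (c - (ζ ^ n) ^ k) := by
        rw [det_pow_sub_one_eq_prod hζ hm]
        congr 1
        refine prod_congr rfl fun k _ => ?_
        rw [det_sub_scalar, hB, eval_sub, eval_pow, eval_X, eval_C, ← pow_mul, ← pow_mul,
          mul_comm n k]
        ring
    _ = (-1) ^ (n + (n + 1) * m) * (c ^ m - 1) := by
        rw [prod_mul_distrib, prod_const, card_range, ← hroots]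
        ring
    _ = 1 - c ^ m := by
        rw [(odd_add_succ_mul_of_coprime hmn).neg_one_pow]
        ring

end

lemma det_one_sub_pow_of_prime {n : ℕ} (hn : n.Prime) {c : ℤ} {A : Matrix (Fin n) (Fin n) ℤ}
    (hA : A.charpoly = X ^ n - C c) (m : ℕ) :
    (1 - A ^ m).det = if n ∣ m then (1 - c ^ (m / n)) ^ n else 1 - c ^ m := by
  split_ifs with h
  · exact det_one_sub_pow_of_dvd hA h
  have hm : 0 < m := Nat.pos_of_ne_zero fun h0 => h (h0 ▸ dvd_zero n)
  have hmn : m.Coprime n := Nat.coprime_comm.mp ((hn.coprime_iff_not_dvd).mpr h)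
  let f := Int.castRingHom ℂ
  have hB : (f.mapMatrix A).charpoly = X ^ n - C (c : ℂ) := by
    rw [RingHom.mapMatrix_apply, charpoly_map, hA]
    simp [f]
  apply Int.cast_injective (α := ℂ)
  rw [← eq_intCast f, RingHom.map_det, map_sub, map_one, map_pow,
    det_one_sub_pow_of_coprime hB (Complex.isPrimitiveRoot_exp m hm.ne') hm hmn]
  simp

end Matrix

lemma sum_moebius_div_divisors (m : ℕ) :
    ∑ r ∈ m.divisors, μ (m / r) = if m = 1 then 1 else 0 := by
  rw [Nat.sum_div_divisors m (fun d => μ d), ← ArithmeticFunction.coe_mul_zeta_apply,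
    ArithmeticFunction.moebius_mul_coe_zeta, ArithmeticFunction.one_apply]

def doldCoeff (f : ℕ → ℤ) (m : ℕ) : ℤ := ∑ r ∈ m.divisors, μ (m / r) * f r

lemma doldCoeff_neg (f : ℕ → ℤ) (m : ℕ) : doldCoeff (fun r => -f r) m = -doldCoeff f m := by
  simp only [doldCoeff, mul_neg, sum_neg_distrib]

lemma doldCoeff_sum_sub_const {ι : Type*} (s : Finset ι) (F : ι → ℕ → ℤ) (a : ℤ) (m : ℕ) :
    doldCoeff (fun r => ∑ j ∈ s, F j r - a) m =
      ∑ j ∈ s, doldCoeff (F j) m - if m = 1 then a else 0 := by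
  simp only [doldCoeff, mul_sub, Finset.mul_sum, sum_sub_distrib]
  rw [sum_comm, ← sum_mul, sum_moebius_div_divisors, ite_mul, one_mul, zero_mul]

lemma doldCoeff_pos {c : ℤ} (hc : 3 ≤ c) {f : ℕ → ℤ} (hle : ∀ r, 0 < r → f r ≤ c ^ r)
    (hlt : ∀ r, 0 < r → c ^ (r / 2 + 1) < 2 * f r) {m : ℕ} (hm : 0 < m) : 0 < doldCoeff f m := by
  have hf : ∀ r ∈ m.properDivisors, 0 ≤ f r := fun r hr => by
    have := hlt r (Nat.pos_of_mem_properDivisors hr)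
    have : 0 < c ^ (r / 2 + 1) := pow_pos (by omega) _
    omega
  have hproper : -∑ r ∈ range (m / 2 + 1), c ^ r ≤
      ∑ r ∈ m.properDivisors, μ (m / r) * f r := calc
    -∑ r ∈ range (m / 2 + 1), c ^ r ≤ -∑ r ∈ m.properDivisors, c ^ r :=
      neg_le_neg <| sum_le_sum_of_subset_of_nonneg (properDivisors_subset_range m)
        fun r _ _ => pow_nonneg (by omega) r
    _ ≤ -∑ r ∈ m.properDivisors, f r :=
      neg_le_neg <| sum_le_sum fun r hr => hle r (Nat.pos_of_mem_properDivisors hr)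
    _ ≤ ∑ r ∈ m.properDivisors, μ (m / r) * f r := by
      rw [← sum_neg_distrib]
      refine sum_le_sum fun r hr => ?_
      have := mul_le_mul_of_nonneg_right
        (neg_le_of_abs_le (ArithmeticFunction.abs_moebius_le_one (n := m / r))) (hf r hr)
      rwa [neg_one_mul] at this
  rw [doldCoeff, ← Nat.cons_self_properDivisors hm.ne', sum_cons, Nat.div_self hm,
    ArithmeticFunction.moebius_apply_one, one_mul]
  linarith [two_mul_geom_sum_lt hc (m / 2 + 1), hlt m hm]

lemma doldCoeff_det_one_sub_pow_neg {n : ℕ} (hn : n.Prime) (hodd : Odd n) {c : ℤ} (hc : 2 < c)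
    {A : Matrix (Fin n) (Fin n) ℤ} (hA : A.charpoly = X ^ n - C c) {m : ℕ} (hm : 0 < m) :
    doldCoeff (fun r => (1 - A ^ r).det) m < 0 := by
  have hnegdet : ∀ r, -(1 - A ^ r).det = if n ∣ r then (c ^ (r / n) - 1) ^ n else c ^ r - 1 := by
    intro r
    rw [det_one_sub_pow_of_prime hn hA]
    split_ifs
    · rw [← hodd.neg_pow, neg_sub]
    · ring
  rw [← neg_neg (doldCoeff _ m), ← doldCoeff_neg, neg_neg_iff_pos]
  refine doldCoeff_pos (c := c) (by omega) (fun r hr => ?_) (fun r hr => ?_) hm <;>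
    rw [hnegdet] <;> split_ifs with h
  · calc (c ^ (r / n) - 1) ^ n ≤ (c ^ (r / n)) ^ n :=
          pow_le_pow_left₀ (sub_nonneg.mpr (one_le_pow₀ (by omega))) (sub_le_self _ zero_le_one) n
      _ = c ^ r := by rw [← pow_mul, Nat.div_mul_cancel h]
  · linarith
  · have hk : 0 < r / n := Nat.div_pos (Nat.le_of_dvd hr h) hn.pos
    have hr' : r = n * (r / n) := (Nat.mul_div_cancel' h).symm
    calc c ^ (r / 2 + 1) ≤ c ^ (r / n * ((n + 1) / 2)) := by
          refine pow_le_pow_right₀ (by omega) ?_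
          have := mul_div_two_lt_of_odd hodd hk
          rw [← hr'] at this
          omega
      _ = (c ^ (r / n)) ^ ((n + 1) / 2) := pow_mul c _ _
      _ < 2 * (c ^ (r / n) - 1) ^ n :=
          lt_two_mul_sub_one_pow (le_trans (by omega) (le_self_pow₀ (by omega) hk.ne')) hodd
  · have : c ^ (r / 2 + 1) ≤ c ^ r := pow_le_pow_right₀ (by omega) (by omega)
    have : c ≤ c ^ r := le_self_pow₀ (by omega) hr.ne'
    linarith

/-- **Algebraic periods of a diagonal self-map of a wedge sum of tori built from maps with
characteristic polynomial `t^n − c`.**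
Let `n` be an odd prime and, for each `j ∈ {1,…,s}`, let `A j` be an integer `n×n` matrix
with characteristic polynomial `t^n − c_j`, where `c_j > 2` (`A j` is the matrix induced on
`H₁(T^n; ℤ)` by the coordinate map `g_{c_j} : T^n → T^n` of the diagonal self-map
`f = g_{c₁} ∨ ⋯ ∨ g_{c_s}` of the wedge sum of `s` copies of `T^n`).  With Lefschetz numbers
`L(f^m) = ∑_{j=1}^s det(I_n − A_j^m) − (s − 1)` and Dold coefficients
`ℓ(f^m) = ∑_{r∣m} μ(m/r)·L(f^r)` (`μ` the Möbius function), one has `ℓ(f^m) ≠ 0` for every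
`m ≥ 1`, i.e. `APer_L(f) = {m : m ≥ 1}`, the set of all positive integers. -/
theorem stmt16 (n s : ℕ) (hn : n.Prime) (hodd : Odd n) (hs : 1 ≤ s)
    (c : Fin s → ℤ) (hc : ∀ j, 2 < c j)
    (A : Fin s → Matrix (Fin n) (Fin n) ℤ)
    (hA : ∀ j, (A j).charpoly = Polynomial.X ^ n - Polynomial.C (c j))
    (L : ℕ → ℤ)
    (hL : ∀ m, L m = (∑ j : Fin s, (1 - (A j) ^ m).det) - ((s : ℤ) - 1))
    (ℓ : ℕ → ℤ)
    (hℓ : ∀ m, ℓ m = ∑ r ∈ m.divisors, (ArithmeticFunction.moebius (m / r)) * L r) :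
    ∀ m, 1 ≤ m → ℓ m ≠ 0 := by
  intro m hm
  have hℓm : ℓ m = ∑ j, doldCoeff (fun r => (1 - A j ^ r).det) m -
      if m = 1 then (s : ℤ) - 1 else 0 := by
    rw [hℓ m, show L = _ from funext hL, ← doldCoeff_sum_sub_const]
    rfl
  have hsum : ∑ j, doldCoeff (fun r => (1 - A j ^ r).det) m < 0 :=
    sum_neg (fun j _ => doldCoeff_det_one_sub_pow_neg hn hodd (hc j) (hA j) hm)
      (univ_nonempty_iff.mpr ⟨⟨0, hs⟩⟩)
  have hconst : 0 ≤ if m = 1 then (s : ℤ) - 1 else 0 := by split_ifs <;> omega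
  omega
end
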